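/- For a normalized operator O (Frobenius norm 1) with computational matrix entries o_{ij}, singular values {γ_l}, and Fourier-TE coefficients {λ_k} (Walsh–Hadamard coefficients of Σ as λ-decomposition), for every α ≥ 0 the CBC-Rényi entropy satisfies H_α({|o_{ij}|^2}) ≥ n - 2 log(Σ_k λ_k) = n - H_{1/2}({λ_k^2}). -/

import Mathlib

/-
The Walsh–Hadamard expansion bounds every singular value by `2^{-n/2} ∑ₛ λₛ`. The rows of `R` and
the columns of `C` are unit vectors, so by Cauchy–Schwarz the same bound holds for every entry of
`O = R Σ C`. A probability vector whose entries are all at most `B` has all its Rényi entropies at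
least `-log B`; with `B = 2^{-n} (∑ₛ λₛ)²` this is the claim.
-/

open scoped ENNReal BigOperators
open Matrix

/-- The α-order Rényi entropy (log base 2). -/
noncomputable def renyiEntropy {ι : Type*} [Fintype ι] (α : ℝ≥0∞) (p : ι → ℝ) : ℝ :=
  if α = 0 then Real.logb 2 (Nat.card {i : ι | p i ≠ 0})
  else if α = 1 then -∑ i, p i * Real.logb 2 (p i)
  else if α = ⊤ then -(Real.logb 2 (⨆ i, p i))
  else (1 - α.toReal)⁻¹ * Real.logb 2 (∑ i, p i ^ α.toReal)

open Real

section UnitaryEntries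

variable {𝕜 m : Type*} [RCLike 𝕜] [Fintype m] [DecidableEq m]

lemma sum_norm_sq_row_of_mem_unitaryGroup {U : Matrix m m 𝕜} (hU : U ∈ unitaryGroup m 𝕜)
    (i : m) : ∑ j, ‖U i j‖ ^ 2 = 1 := by
  have h := congrFun (congrFun (mem_unitaryGroup_iff.mp hU) i) i
  simp only [mul_apply, star_apply, RCLike.star_def, RCLike.mul_conj, one_apply_eq] at h
  exact_mod_cast h

lemma sum_norm_sq_col_of_mem_unitaryGroup {U : Matrix m m 𝕜} (hU : U ∈ unitaryGroup m 𝕜)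
    (j : m) : ∑ i, ‖U i j‖ ^ 2 = 1 := by
  simpa [conjTranspose_apply] using sum_norm_sq_row_of_mem_unitaryGroup (Unitary.star_mem hU) j

lemma norm_mul_diagonal_mul_apply_le {R C : Matrix m m 𝕜} (hR : R ∈ unitaryGroup m 𝕜)
    (hC : C ∈ unitaryGroup m 𝕜) {d : m → 𝕜} {M : ℝ} (hd : ∀ l, ‖d l‖ ≤ M) (i j : m) :
    ‖(R * diagonal d * C) i j‖ ≤ M := by
  have hM : 0 ≤ M := (norm_nonneg _).trans (hd i)
  have hCS : ∑ l, ‖R i l‖ * ‖C l j‖ ≤ 1 := by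
    simpa [sum_norm_sq_row_of_mem_unitaryGroup hR, sum_norm_sq_col_of_mem_unitaryGroup hC] using
      Real.sum_mul_le_sqrt_mul_sqrt Finset.univ (fun l => ‖R i l‖) (fun l => ‖C l j‖)
  calc ‖(R * diagonal d * C) i j‖ = ‖∑ l, R i l * d l * C l j‖ := by
        simp only [mul_apply (M := R * diagonal d), mul_diagonal]
    _ ≤ ∑ l, ‖R i l‖ * ‖d l‖ * ‖C l j‖ := by
        simpa only [norm_mul] using norm_sum_le Finset.univ fun l => R i l * d l * C l j
    _ ≤ ∑ l, M * (‖R i l‖ * ‖C l j‖) := by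
        refine Finset.sum_le_sum fun l _ => ?_
        rw [mul_comm ‖R i l‖, mul_assoc]
        exact mul_le_mul_of_nonneg_right (hd l) (by positivity)
    _ ≤ M := by
        rw [← Finset.mul_sum]
        exact mul_le_of_le_one_right hM hCS

end UnitaryEntries

section RenyiLowerBound

variable {ι : Type*} [Fintype ι] {p : ι → ℝ} {B : ℝ}

lemma one_le_card_support_mul (hpB : ∀ i, p i ≤ B) (hsum : ∑ i, p i = 1) :
    1 ≤ Nat.card {i | p i ≠ 0} * B := by
  rw [Nat.card_eq_fintype_card, Fintype.card_subtype, ← nsmul_eq_mul, ← hsum,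
    ← Finset.sum_filter_ne_zero]
  exact Finset.sum_le_card_nsmul _ _ _ fun i _ => hpB i

lemma sum_mul_logb_le (hp : ∀ i, 0 ≤ p i) (hpB : ∀ i, p i ≤ B) (hsum : ∑ i, p i = 1) :
    ∑ i, p i * logb 2 (p i) ≤ logb 2 B := by
  calc ∑ i, p i * logb 2 (p i) ≤ ∑ i, p i * logb 2 B := by
        refine Finset.sum_le_sum fun i _ => ?_
        rcases (hp i).eq_or_lt with h | h
        · simp [← h]
        · exact mul_le_mul_of_nonneg_left (logb_le_logb_of_le one_lt_two h (hpB i)) (hp i)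
    _ = logb 2 B := by rw [← Finset.sum_mul, hsum, one_mul]

lemma sum_rpow_le_of_one_lt (hp : ∀ i, 0 ≤ p i) (hpB : ∀ i, p i ≤ B) (hsum : ∑ i, p i = 1)
    {a : ℝ} (ha : 1 < a) : ∑ i, p i ^ a ≤ B ^ (a - 1) := by
  calc ∑ i, p i ^ a = ∑ i, p i ^ (a - 1) * p i := by
        refine Finset.sum_congr rfl fun i _ => ?_
        rw [← rpow_add_one' (hp i) (by linarith), sub_add_cancel]
    _ ≤ ∑ i, B ^ (a - 1) * p i := Finset.sum_le_sum fun i _ =>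
        mul_le_mul_of_nonneg_right (rpow_le_rpow (hp i) (hpB i) (by linarith)) (hp i)
    _ = B ^ (a - 1) := by rw [← Finset.mul_sum, hsum, mul_one]

lemma rpow_le_sum_rpow_of_lt_one (hp : ∀ i, 0 ≤ p i) (hpB : ∀ i, p i ≤ B)
    (hsum : ∑ i, p i = 1) {a : ℝ} (ha₀ : 0 < a) (ha : a < 1) : B ^ (a - 1) ≤ ∑ i, p i ^ a := by
  calc B ^ (a - 1) = ∑ i, B ^ (a - 1) * p i := by rw [← Finset.mul_sum, hsum, mul_one]
    _ ≤ ∑ i, p i ^ (a - 1) * p i := by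
        refine Finset.sum_le_sum fun i _ => ?_
        rcases (hp i).eq_or_lt with h | h
        · simp [← h]
        · exact mul_le_mul_of_nonneg_right (rpow_le_rpow_of_nonpos h (hpB i) (by linarith)) h.le
    _ = ∑ i, p i ^ a := by
        refine Finset.sum_congr rfl fun i _ => ?_
        rw [← rpow_add_one' (hp i) (by linarith), sub_add_cancel]

theorem neg_logb_le_renyiEntropy (hp : ∀ i, 0 ≤ p i) (hpB : ∀ i, p i ≤ B)
    (hsum : ∑ i, p i = 1) (α : ℝ≥0∞) : -logb 2 B ≤ renyiEntropy α p := by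
  obtain ⟨i₀, hi₀⟩ : ∃ i, 0 < p i := by
    simpa using Finset.exists_lt_of_sum_lt (by simp [hsum] : ∑ _i : ι, (0 : ℝ) < ∑ i, p i)
  have hB : 0 < B := hi₀.trans_le (hpB i₀)
  unfold renyiEntropy
  split_ifs with h₀ h₁ htop
  · have := logb_le_logb_of_le one_lt_two (inv_pos.2 hB)
      ((inv_le_iff_one_le_mul₀ hB).2 (one_le_card_support_mul hpB hsum))
    rwa [logb_inv] at this
  · linarith [sum_mul_logb_le hp hpB hsum]
  · have : Nonempty ι := ⟨i₀⟩
    have hbdd := (Set.finite_range p).bddAbove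
    linarith [logb_le_logb_of_le one_lt_two (hi₀.trans_le (le_ciSup hbdd i₀)) (ciSup_le hpB)]
  · set a := α.toReal
    have ha₀ : 0 < a := ENNReal.toReal_pos h₀ htop
    have ha₁ : a ≠ 1 := mt (ENNReal.toReal_eq_one_iff α).1 h₁
    have hlogB : logb 2 (B ^ (a - 1)) = (a - 1) * logb 2 B := logb_rpow_eq_mul_logb_of_pos hB
    rw [inv_mul_eq_div]
    rcases ha₁.lt_or_gt with ha | ha
    · have := logb_le_logb_of_le one_lt_two (rpow_pos_of_pos hB _)
        (rpow_le_sum_rpow_of_lt_one hp hpB hsum ha₀ ha)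
      rw [le_div_iff₀ (by linarith)]
      linarith
    · have hpos : 0 < ∑ i, p i ^ a :=
        Finset.sum_pos' (fun i _ => rpow_nonneg (hp i) a)
          ⟨i₀, Finset.mem_univ _, rpow_pos_of_pos hi₀ a⟩
      have := logb_le_logb_of_le one_lt_two hpos (sum_rpow_le_of_one_lt hp hpB hsum ha)
      rw [le_div_iff_of_neg (by linarith)]
      linarith

end RenyiLowerBound

lemma renyiEntropy_half_sq {ι : Type*} [Fintype ι] {q : ι → ℝ} (hq : ∀ i, 0 ≤ q i) :
    renyiEntropy (1 / 2) (fun i => q i ^ 2) = 2 * logb 2 (∑ i, q i) := by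
  have hhalf : (1 / 2 : ℝ≥0∞).toReal = 1 / 2 := by norm_num
  have hsqrt : ∀ i, (q i ^ 2) ^ (1 / 2 : ℝ) = q i := fun i => by
    rw [← rpow_natCast, ← rpow_mul (hq i)]
    norm_num
  simp only [renyiEntropy, hhalf, hsqrt]
  norm_num

lemma abs_walshSum_le {n : ℕ} {lam ε : (Fin n → Fin 2) → ℝ} (hlam : ∀ s, 0 ≤ lam s)
    (hε : ∀ s, ε s = 1 ∨ ε s = -1) (l : Fin n → Fin 2) :
    |∑ s, ε s * lam s * (-1 : ℝ) ^ (∑ t, (s t).val * (l t).val)| ≤ ∑ s, lam s := by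
  refine (Finset.abs_sum_le_sum_abs _ _).trans (le_of_eq (Finset.sum_congr rfl fun s _ => ?_))
  rcases hε s with h | h <;> simp [h, abs_mul, abs_of_nonneg (hlam s)]

theorem cbc_lower_bound_general (n : ℕ)
    (O R C : Matrix (Fin n → Fin 2) (Fin n → Fin 2) ℂ)
    (hR : R ∈ Matrix.unitaryGroup (Fin n → Fin 2) ℂ)
    (hC : C ∈ Matrix.unitaryGroup (Fin n → Fin 2) ℂ)
    (γ lam ε : (Fin n → Fin 2) → ℝ)
    (hO : O = R * Matrix.diagonal (fun l => (γ l : ℂ)) * C)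
    (hFro : ∑ i, ∑ j, ‖O i j‖ ^ 2 = 1)
    (hlam : ∀ s, 0 ≤ lam s) (hlams : ∑ s, lam s ^ 2 = 1)
    (hε : ∀ s, ε s = 1 ∨ ε s = -1)
    (hWH : ∀ l, γ l =
      (2 : ℝ) ^ (-(n : ℝ) / 2) *
        ∑ s, ε s * lam s * (-1 : ℝ) ^ (∑ t, (s t).val * (l t).val)) :
    (∀ α : ℝ≥0∞,
      renyiEntropy α (fun x : (Fin n → Fin 2) × (Fin n → Fin 2) => ‖O x.1 x.2‖ ^ 2)
        ≥ n - 2 * Real.logb 2 (∑ s, lam s)) ∧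
    renyiEntropy (1 / 2) (fun s => lam s ^ 2) = 2 * Real.logb 2 (∑ s, lam s) := by
  set S := ∑ s, lam s
  have hS : 0 < S := by
    obtain ⟨s, hs⟩ : ∃ s, lam s ≠ 0 := by
      by_contra! h
      simp [h] at hlams
    exact Finset.sum_pos' (fun s _ => hlam s) ⟨s, Finset.mem_univ s, (hlam s).lt_of_ne' hs⟩
  set c := (2 : ℝ) ^ (-(n : ℝ) / 2)
  have hc : 0 < c := by positivity
  have hγ : ∀ l, ‖(γ l : ℂ)‖ ≤ c * S := fun l => by
    rw [Complex.norm_real, Real.norm_eq_abs, hWH l, abs_mul, abs_of_pos hc]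
    exact mul_le_mul_of_nonneg_left (abs_walshSum_le hlam hε l) hc.le
  have hentry : ∀ x : (Fin n → Fin 2) × (Fin n → Fin 2), ‖O x.1 x.2‖ ^ 2 ≤ (c * S) ^ 2 :=
    fun x => by
      rw [hO]
      exact pow_le_pow_left₀ (norm_nonneg _) (norm_mul_diagonal_mul_apply_le hR hC hγ _ _) 2
  have hlogB : -logb 2 ((c * S) ^ 2) = n - 2 * logb 2 S := by
    rw [logb_pow, logb_mul hc.ne' hS.ne', logb_rpow two_pos (by norm_num)]
    ring
  refine ⟨fun α => ?_, renyiEntropy_half_sq hlam⟩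
  rw [ge_iff_le, ← hlogB]
  exact neg_logb_le_renyiEntropy (fun x => by positivity) hentry (by rwa [Fintype.sum_prod_type]) α

/-- CBC lower bound from Fourier-TE: for a Frobenius-norm-1 operator `O = R Σ C`
(SVD with `Σ = diag(γ) = 2^{-n/2} ∑ λ_s Q_s`, `Q_s = ε_s Z^s` signed diagonal Paulis,
`λ ≥ 0`, `∑ λ² = 1`), for every `α ≥ 0` the CBC-Rényi entropy of the matrix-entry
distribution satisfies
`H_α({|o_{ij}|²}) ≥ n - 2 log₂(∑ λ_s) = n - H_{1/2}({λ_s²})`. -/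
theorem cbc_lower_bound (n : ℕ)
    (O R C : Matrix (Fin n → Fin 2) (Fin n → Fin 2) ℂ)
    (hR : R ∈ Matrix.unitaryGroup (Fin n → Fin 2) ℂ)
    (hC : C ∈ Matrix.unitaryGroup (Fin n → Fin 2) ℂ)
    (γ lam ε : (Fin n → Fin 2) → ℝ)
    (hO : O = R * Matrix.diagonal (fun l => (γ l : ℂ)) * C)
    (hFro : ∑ i, ∑ j, ‖O i j‖ ^ 2 = 1)
    (hγ : ∀ l, 0 ≤ γ l) (hγs : ∑ l, γ l ^ 2 = 1)
    (hlam : ∀ s, 0 ≤ lam s) (hlams : ∑ s, lam s ^ 2 = 1)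
    (hε : ∀ s, ε s = 1 ∨ ε s = -1)
    (hWH : ∀ l, γ l =
      (2 : ℝ) ^ (-(n : ℝ) / 2) *
        ∑ s, ε s * lam s * (-1 : ℝ) ^ (∑ t, (s t).val * (l t).val)) :
    (∀ α : ℝ≥0∞,
      renyiEntropy α (fun x : (Fin n → Fin 2) × (Fin n → Fin 2) => ‖O x.1 x.2‖ ^ 2)
        ≥ n - 2 * Real.logb 2 (∑ s, lam s)) ∧
    renyiEntropy (1 / 2) (fun s => lam s ^ 2) = 2 * Real.logb 2 (∑ s, lam s) :=
  cbc_lower_bound_general n O R C hR hC γ lam ε hO hFro hlam hlams hε hWH
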